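/- arXiv:1409.7033 — 2 statements merged into one kernel-verified Lean document; each statement's English description precedes it below -/
import Mathlib

section
/- Let D be the improved digraph whose associated undirected graph F is a forest whose negative trees are T_1,…,T_k. For J ⊆ {1,…,k}, let D_J = D − ⋃_{i ∈ {1,…,k}∖J} A(T_i), and let d_J denote the distance function of D_J when c is nearly conservative on D_J (with value +∞ for unreachable pairs). Suppose that for every i ∈ J, c is nearly conservative on D_{J∖{i}}, and that c is nearly conservative on D_J. Then for all vertices s,t: d_J(s,t) = min( d_∅(s,t), min over i ∈ J of min over u,v ∈ V(T_i) of [ d_∅(s,u) + d^{T_i}(u,v) + d_{J∖{i}}(v,t) ] ). -/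
set_option linter.unusedSectionVars false
set_option maxHeartbeats 1000000


namespace NearlyConservativePaper

variable {V : Type} [Fintype V] [DecidableEq V]

/-- A weighted digraph given by adjacency and arc weights. -/
structure WDigraph (V : Type) where
  Adj : V → V → Prop
  c : V → V → ℝ

/-- A step `(u, v, b)` of a walk: `b = false` means an original arc from `u` to `v`,
`b = true` means the added loose arc from `u` to `v`. -/
abbrev Step (V : Type) := V × V × Bool

/-- `IsWalk AS s t l`: `l` is a walk from `s` to `t` using arcs allowed by `AS`. -/
def IsWalk (AS : V → V → Bool → Prop) : V → V → List (Step V) → Prop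
  | s, t, [] => s = t
  | s, t, (u, v, b) :: l => u = s ∧ AS u v b ∧ IsWalk AS v t l

/-- The list of head-vertices of the steps of a walk. -/
def heads (l : List (Step V)) : List V := l.map fun a => a.2.1

/-- Total weight of a walk with respect to the step-weight `w`. -/
def wSum (w : V → V → Bool → ℝ) (l : List (Step V)) : ℝ :=
  (l.map fun a => w a.1 a.2.1 a.2.2).sum

/-- A directed cycle: a nonempty closed walk whose vertices are pairwise distinct. -/
def IsCycle (AS : V → V → Bool → Prop) (s : V) (l : List (Step V)) : Prop :=
  IsWalk AS s s l ∧ l ≠ [] ∧ (heads l).Nodup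

/-- A directed (simple) path. -/
def IsPath (AS : V → V → Bool → Prop) (s t : V) (l : List (Step V)) : Prop :=
  IsWalk AS s t l ∧ (s :: heads l).Nodup

/-- Nearly conservative: every negative directed cycle consists of exactly two arcs. -/
def NearlyCons (AS : V → V → Bool → Prop) (w : V → V → Bool → ℝ) : Prop :=
  ∀ s l, IsCycle AS s l → wSum w l < 0 → l.length = 2

/-- Minimum weight of a directed path from `s` to `t`, `+∞` if there is none. -/
noncomputable def distW (AS : V → V → Bool → Prop) (w : V → V → Bool → ℝ)
    (s t : V) : EReal :=
  sInf {x : EReal | ∃ l, IsPath AS s t l ∧ (wSum w l : EReal) = x}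

namespace WDigraph

variable (D : WDigraph V)

/-- The arc `uv` is special if `vu` is also an arc and `c(uv) + c(vu) < 0`. -/
def Special (u v : V) : Prop := D.Adj u v ∧ D.Adj v u ∧ D.c u v + D.c v u < 0

/-- The arcs of the original digraph `D` (only `b = false` steps). -/
def baseArcs (u v : V) (b : Bool) : Prop := b = false ∧ D.Adj u v

/-- The arcs of the improved digraph: original arcs and, for every special arc `vu`,
an added loose ordinary arc from `u` to `v`. -/
def ImpArc (u v : V) (b : Bool) : Prop := if b then D.Special v u else D.Adj u v

/-- The weight of a step of the improved digraph: the loose arc added for the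
special arc `vu` has weight `-c(vu)`. -/
def impW (u v : V) (b : Bool) : ℝ := if b then -(D.c v u) else D.c u v

/-- A walk is special-simple if it contains every special arc at most once and never
contains both a special arc and its opposite. -/
def SpecialSimple (l : List (Step V)) : Prop :=
  ∀ u v, D.Special u v → l.count (u, v, false) + l.count (v, u, false) ≤ 1

/-- The associated undirected graph `F`. -/
def F : SimpleGraph V where
  Adj u v := u ≠ v ∧ D.Special u v
  symm := ⟨by
    rintro u v ⟨hne, h1, h2, h3⟩
    exact ⟨hne.symm, h2, h1, by linarith⟩⟩
  loopless := ⟨by rintro u ⟨hne, -⟩; exact hne rfl⟩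

/-- The weight of a walk of `F`, each edge being traversed as the special arc pointing
in the direction of the traversal. -/
def fWeight {s t : V} (p : D.F.Walk s t) : ℝ :=
  (p.darts.map fun d => D.c d.toProd.1 d.toProd.2).sum

/-- The improved digraph with the original (special) arcs in `Rem` removed. -/
def arcsMinus (Rem : V → V → Prop) (u v : V) (b : Bool) : Prop :=
  D.ImpArc u v b ∧ ¬ (b = false ∧ Rem u v)

end WDigraph

/-- The special arcs of the negative tree containing `t₀` (to be removed from `D`). -/
def remT (D : WDigraph V) (t₀ : V) : V → V → Prop :=
  fun x y => D.F.Adj x y ∧ D.F.Reachable t₀ x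

/-- The special arcs of the negative trees `T_i` with `i ∉ J` (to be removed from `D`,
yielding `D_J`); here `t₀ i` is a base vertex of the `i`-th negative tree. -/
def remJ (D : WDigraph V) {k : ℕ} (t₀ : Fin k → V) (J : Finset (Fin k)) : V → V → Prop :=
  fun x y => D.F.Adj x y ∧ ∃ i, i ∉ J ∧ D.F.Reachable (t₀ i) x


section WalkLib

variable {AS : V → V → Bool → Prop} {w : V → V → Bool → ℝ}

lemma isWalk_nil {s t : V} : IsWalk AS s t ([] : List (Step V)) ↔ s = t := Iff.rfl

lemma isWalk_cons {s t u v : V} {b : Bool} {l : List (Step V)} :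
    IsWalk AS s t ((u, v, b) :: l) ↔ u = s ∧ AS u v b ∧ IsWalk AS v t l := Iff.rfl

@[simp] lemma heads_nil : heads ([] : List (Step V)) = [] := rfl

@[simp] lemma heads_cons {a : Step V} {l : List (Step V)} :
    heads (a :: l) = a.2.1 :: heads l := rfl

@[simp] lemma heads_append {l₁ l₂ : List (Step V)} :
    heads (l₁ ++ l₂) = heads l₁ ++ heads l₂ := List.map_append

@[simp] lemma wSum_nil : wSum w ([] : List (Step V)) = 0 := rfl

@[simp] lemma wSum_cons {a : Step V} {l : List (Step V)} :
    wSum w (a :: l) = w a.1 a.2.1 a.2.2 + wSum w l := by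
  simp [wSum]

@[simp] lemma wSum_append {l₁ l₂ : List (Step V)} :
    wSum w (l₁ ++ l₂) = wSum w l₁ + wSum w l₂ := by
  simp [wSum]

lemma walk_append {s m t : V} {p q : List (Step V)}
    (hp : IsWalk AS s m p) (hq : IsWalk AS m t q) : IsWalk AS s t (p ++ q) := by
  induction p generalizing s with
  | nil => cases hp; simpa using hq
  | cons a p ih =>
    obtain ⟨u, v, b⟩ := a
    obtain ⟨rfl, h1, h2⟩ := hp
    exact ⟨rfl, h1, ih h2⟩

lemma walk_arc_mem {s t u v : V} {b : Bool} {l : List (Step V)}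
    (hl : IsWalk AS s t l) (hm : (u, v, b) ∈ l) : AS u v b := by
  induction l generalizing s with
  | nil => simp at hm
  | cons a p ih =>
    obtain ⟨x, y, c⟩ := a
    obtain ⟨rfl, h1, h2⟩ := hl
    rcases List.mem_cons.1 hm with h | h
    · obtain ⟨rfl, rfl, rfl⟩ := Prod.mk.injEq .. ▸ (by
        injection h with h1 h2; injection h2 with h2 h3
        exact ⟨h1, h2, h3⟩ : u = x ∧ v = y ∧ b = c)
      exact h1
    · exact ih h2 h

lemma walk_mono {AS' : V → V → Bool → Prop} (h : ∀ u v b, AS u v b → AS' u v b)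
    {s t : V} {l : List (Step V)} (hl : IsWalk AS s t l) : IsWalk AS' s t l := by
  induction l generalizing s with
  | nil => exact hl
  | cons a p ih =>
    obtain ⟨x, y, c⟩ := a
    obtain ⟨rfl, h1, h2⟩ := hl
    exact ⟨rfl, h x y c h1, ih h2⟩

lemma walk_end_mem_heads {s v : V} {l : List (Step V)}
    (hl : IsWalk AS s v l) (hne : l ≠ []) : v ∈ heads l := by
  induction l generalizing s with
  | nil => exact absurd rfl hne
  | cons a p ih =>
    obtain ⟨x, y, c⟩ := a
    obtain ⟨rfl, h1, h2⟩ := hl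
    rcases p with _ | ⟨b, q⟩
    · cases h2; simp
    · simpa using Or.inr (ih h2 (by simp))

lemma split_at_head_mem {s t a : V} {l : List (Step V)}
    (hl : IsWalk AS s t l) (hm : a ∈ heads l) :
    ∃ p q, l = p ++ q ∧ p ≠ [] ∧ IsWalk AS s a p ∧ IsWalk AS a t q := by
  induction l generalizing s with
  | nil => simp at hm
  | cons st p ih =>
    obtain ⟨x, y, c⟩ := st
    obtain ⟨rfl, h1, h2⟩ := hl
    rcases List.mem_cons.1 hm with h | h
    · subst h
      exact ⟨[(x, a, c)], p, rfl, by simp, ⟨rfl, h1, rfl⟩, h2⟩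
    · obtain ⟨p', q', rfl, hne, hw1, hw2⟩ := ih h2 h
      exact ⟨(x, y, c) :: p', q', rfl, by simp, ⟨rfl, h1, hw1⟩, hw2⟩

lemma split_dup_heads {s t : V} {l : List (Step V)}
    (hl : IsWalk AS s t l) (hd : ¬ (heads l).Nodup) :
    ∃ a l₁ l₂ l₃, l = l₁ ++ l₂ ++ l₃ ∧ l₁ ≠ [] ∧ l₂ ≠ [] ∧
      IsWalk AS s a l₁ ∧ IsWalk AS a a l₂ ∧ IsWalk AS a t l₃ := by
  induction l generalizing s with
  | nil => simp at hd
  | cons st p ih =>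
    obtain ⟨x, y, c⟩ := st
    obtain ⟨rfl, h1, h2⟩ := hl
    by_cases hy : y ∈ heads p
    · obtain ⟨p', q', rfl, hne, hw1, hw2⟩ := split_at_head_mem h2 hy
      exact ⟨y, [(x, y, c)], p', q', by simp, by simp, hne, ⟨rfl, h1, rfl⟩, hw1, hw2⟩
    · have hd' : ¬ (heads p).Nodup := by
        intro hn; exact hd (by simpa [hy] using hn)
      obtain ⟨a, m₁, m₂, m₃, rfl, hne1, hne2, hw1, hw2, hw3⟩ := ih h2 hd'
      exact ⟨a, (x, y, c) :: m₁, m₂, m₃, by simp, by simp, hne2,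
        ⟨rfl, h1, hw1⟩, hw2, hw3⟩

lemma split_walk {s t : V} {l : List (Step V)}
    (hl : IsWalk AS s t l) (hd : ¬ (s :: heads l).Nodup) :
    ∃ a l₁ l₂ l₃, l = l₁ ++ l₂ ++ l₃ ∧ l₂ ≠ [] ∧
      IsWalk AS s a l₁ ∧ IsWalk AS a a l₂ ∧ IsWalk AS a t l₃ := by
  by_cases hs : s ∈ heads l
  · obtain ⟨p, q, rfl, hne, hw1, hw2⟩ := split_at_head_mem hl hs
    exact ⟨s, [], p, q, rfl, hne, rfl, hw1, hw2⟩
  · have hd' : ¬ (heads l).Nodup := by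
      intro hn; exact hd (List.nodup_cons.2 ⟨hs, hn⟩)
    obtain ⟨a, l₁, l₂, l₃, rfl, _, hne2, hw1, hw2, hw3⟩ := split_dup_heads hl hd'
    exact ⟨a, l₁, l₂, l₃, rfl, hne2, hw1, hw2, hw3⟩

/-- Every closed walk whose steps (with multiplicity) come from `l` has nonnegative
weight, provided every cycle with steps from `l` has nonnegative weight. -/
lemma closed_nonneg {l : List (Step V)}
    (H : ∀ x c, IsCycle AS x c → (∀ a : Step V, c.count a ≤ l.count a) → 0 ≤ wSum w c) :
    ∀ n (c : List (Step V)) (x : V), c.length ≤ n → IsWalk AS x x c →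
      (∀ a : Step V, c.count a ≤ l.count a) → 0 ≤ wSum w c := by
  intro n
  induction n with
  | zero =>
    intro c x hlen _ _
    interval_cases h : c.length
    · rw [List.length_eq_zero_iff] at h; subst h; simp
  | succ n ih =>
    intro c x hlen hw hcnt
    rcases eq_or_ne c [] with rfl | hne
    · simp
    by_cases hnd : (heads c).Nodup
    · exact H x c ⟨hw, hne, hnd⟩ hcnt
    · obtain ⟨a, c₁, c₂, c₃, rfl, hne1, hne2, hw1, hw2, hw3⟩ := split_dup_heads hw hnd
      have hcnt2 : ∀ a : Step V, c₂.count a ≤ l.count a := by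
        intro b; refine le_trans ?_ (hcnt b); simp [List.count_append]; omega
      have hcnt13 : ∀ a : Step V, (c₁ ++ c₃).count a ≤ l.count a := by
        intro b; refine le_trans ?_ (hcnt b); simp [List.count_append]
      have h2 : 0 ≤ wSum w c₂ := by
        refine ih c₂ a ?_ hw2 hcnt2
        have := @List.length_append _ (c₁ ++ c₂) c₃
        have := @List.length_append _ c₁ c₂
        have h1 : 0 < c₁.length := List.length_pos_iff.2 hne1
        simp only [List.length_append] at hlen ⊢
        omega
      have h13 : 0 ≤ wSum w (c₁ ++ c₃) := by
        refine ih (c₁ ++ c₃) x ?_ (walk_append hw1 hw3) hcnt13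
        have h2' : 0 < c₂.length := List.length_pos_iff.2 hne2
        simp only [List.length_append] at hlen ⊢
        omega
      have : wSum w (c₁ ++ c₂ ++ c₃) = wSum w (c₁ ++ c₃) + wSum w c₂ := by
        simp; ring
      rw [this]
      linarith

/-- From a walk, extract a path of no greater weight, provided every cycle with
steps from the walk has nonnegative weight. -/
lemma extract_path_aux :
    ∀ n (l : List (Step V)) (s t : V), l.length ≤ n → IsWalk AS s t l →
    (∀ x c, IsCycle AS x c → (∀ a : Step V, c.count a ≤ l.count a) → 0 ≤ wSum w c) →
    ∃ p, IsPath AS s t p ∧ wSum w p ≤ wSum w l := by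
  intro n
  induction n with
  | zero =>
    intro l s t hlen hw H
    rw [Nat.le_zero, List.length_eq_zero_iff] at hlen
    subst hlen
    exact ⟨[], ⟨hw, by simp⟩, le_refl _⟩
  | succ n ih =>
    intro l s t hlen hw H
    by_cases hnd : (s :: heads l).Nodup
    · exact ⟨l, ⟨hw, hnd⟩, le_refl _⟩
    obtain ⟨a, l₁, l₂, l₃, rfl, hne2, hw1, hw2, hw3⟩ := split_walk hw hnd
    have hcnt2 : ∀ b : Step V, l₂.count b ≤ (l₁ ++ l₂ ++ l₃).count b := by
      intro b; simp [List.count_append]; omega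
    have h2 : 0 ≤ wSum w l₂ :=
      closed_nonneg H l₂.length l₂ a le_rfl hw2 hcnt2
    have hcnt13 : ∀ b : Step V, (l₁ ++ l₃).count b ≤ (l₁ ++ l₂ ++ l₃).count b := by
      intro b; simp [List.count_append]
    have hlen13 : (l₁ ++ l₃).length ≤ n := by
      have : 0 < l₂.length := List.length_pos_iff.2 hne2
      simp only [List.length_append] at hlen ⊢
      omega
    obtain ⟨p, hp, hple⟩ := ih (l₁ ++ l₃) s t hlen13 (walk_append hw1 hw3)
      (fun x c hc hcnt => H x c hc (fun b => le_trans (hcnt b) (hcnt13 b)))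
    refine ⟨p, hp, le_trans hple ?_⟩
    have : wSum w (l₁ ++ l₂ ++ l₃) = wSum w (l₁ ++ l₃) + wSum w l₂ := by simp; ring
    rw [this]; linarith

lemma extract_path {s t : V} {l : List (Step V)} (hw : IsWalk AS s t l)
    (H : ∀ x c, IsCycle AS x c → (∀ a : Step V, c.count a ≤ l.count a) → 0 ≤ wSum w c) :
    ∃ p, IsPath AS s t p ∧ wSum w p ≤ wSum w l :=
  extract_path_aux l.length l s t le_rfl hw H

lemma split_first (p : Step V → Prop) [DecidablePred p] {s t : V} {l : List (Step V)}
    (hw : IsWalk AS s t l) :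
    (∀ a ∈ l, ¬ p a) ∨
    ∃ (u v : V) (b : Bool) (l₁ l₂ : List (Step V)), l = l₁ ++ (u, v, b) :: l₂ ∧
      (∀ a ∈ l₁, ¬ p a) ∧ p (u, v, b) ∧ IsWalk AS s u l₁ ∧ AS u v b ∧ IsWalk AS v t l₂ := by
  induction l generalizing s with
  | nil => exact Or.inl (by simp)
  | cons a l ih =>
    obtain ⟨x, y, c⟩ := a
    obtain ⟨rfl, h1, h2⟩ := hw
    by_cases hp : p (x, y, c)
    · exact Or.inr ⟨x, y, c, [], l, rfl, by simp, hp, rfl, h1, h2⟩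
    · rcases ih h2 with h | ⟨u, v, b, l₁, l₂, rfl, hn1, hp2, hw1, ha, hw2⟩
      · exact Or.inl (by
          intro a ha
          rcases List.mem_cons.1 ha with rfl | ha
          · exact hp
          · exact h a ha)
      · exact Or.inr ⟨u, v, b, (x, y, c) :: l₁, l₂, rfl, by
          intro a ha
          rcases List.mem_cons.1 ha with rfl | ha
          · exact hp
          · exact hn1 a ha, hp2, ⟨rfl, h1, hw1⟩, ha, hw2⟩

lemma split_last (p : V → Prop) {s t : V} {l : List (Step V)} (hw : IsWalk AS s t l) :
    ∃ (v : V) (l₁ l₂ : List (Step V)), l = l₁ ++ l₂ ∧ IsWalk AS s v l₁ ∧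
      IsWalk AS v t l₂ ∧ (p v ∨ (l₁ = [] ∧ v = s)) ∧ ∀ y ∈ heads l₂, ¬ p y := by
  induction l generalizing s with
  | nil => exact ⟨s, [], [], rfl, rfl, hw, Or.inr ⟨rfl, rfl⟩, by simp⟩
  | cons a l ih =>
    obtain ⟨x, y, c⟩ := a
    obtain ⟨rfl, h1, h2⟩ := hw
    obtain ⟨v, m₁, m₂, hleq, hw1, hw2, hvp, hno⟩ := ih h2
    rcases hvp with hvp | ⟨hm, hv⟩
    · exact ⟨v, (x, y, c) :: m₁, m₂, by rw [hleq]; rfl, ⟨rfl, h1, hw1⟩, hw2,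
        Or.inl hvp, hno⟩
    · by_cases hpy : p v
      · exact ⟨v, [(x, y, c)], m₂, by simp [hleq, hm], ⟨rfl, h1, hv.symm⟩, hw2,
          Or.inl hpy, hno⟩
      · refine ⟨x, [], (x, y, c) :: m₂, by simp [hleq, hm], rfl,
          ⟨rfl, h1, hv ▸ hw2⟩, Or.inr ⟨rfl, rfl⟩, ?_⟩
        intro z hz
        rcases List.mem_cons.1 hz with rfl | hz
        · exact hv ▸ hpy
        · exact hno z hz

lemma head_mem_heads {a : Step V} {l : List (Step V)} (h : a ∈ l) :
    a.2.1 ∈ heads l := List.mem_map_of_mem (f := fun a : Step V => a.2.1) h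

lemma count_le_heads (u v : V) (b : Bool) (l : List (Step V)) :
    l.count (u, v, b) ≤ (heads l).count v := by
  induction l with
  | nil => simp
  | cons a l ih =>
    by_cases ha : a = (u, v, b)
    · subst ha
      simp only [List.count_cons, heads_cons, if_pos rfl]
      simpa using ih
    · simp only [List.count_cons, heads_cons]
      rcases eq_or_ne a.2.1 v with hv | hv
      · simp only [hv]
        have : ¬ ((u, v, b) = a) := fun h => ha h.symm
        simp [this, ha]
        omega
      · have : ¬ ((u, v, b) = a) := fun h => ha h.symm
        have hv' : ¬ (v = a.2.1) := fun h => hv h.symm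
        simp [this, ha, hv']
        omega

lemma no_self_step {s t u : V} {b : Bool} {l : List (Step V)}
    (hp : IsPath AS s t l) : (u, u, b) ∉ l := by
  obtain ⟨hw, hnd⟩ := hp
  induction l generalizing s with
  | nil => simp
  | cons a l ih =>
    obtain ⟨x, y, c⟩ := a
    obtain ⟨rfl, h1, h2⟩ := hw
    simp only [List.mem_cons, not_or]
    constructor
    · rintro h
      injection h with e1 e2
      injection e2 with e2 e3
      subst e1; subst e2
      simp at hnd
    · exact ih h2 (by
        simp only [heads_cons, List.nodup_cons] at hnd ⊢
        exact hnd.2)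

lemma path_no_rev {s t u v : V} {b b' : Bool} {l : List (Step V)}
    (hp : IsPath AS s t l) (h1 : (u, v, b) ∈ l) (h2 : (v, u, b') ∈ l) : u = v := by
  obtain ⟨hw, hnd⟩ := hp
  induction l generalizing s with
  | nil => simp at h1
  | cons a l ih =>
    obtain ⟨x, y, c⟩ := a
    obtain ⟨rfl, ha, hwl⟩ := hw
    rw [heads_cons, List.nodup_cons] at hnd
    rcases List.mem_cons.1 h1 with e1 | h1'
    · injection e1 with e1 e2; injection e2 with e2 e3
      subst e1; subst e2
      rcases List.mem_cons.1 h2 with e2 | h2'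
      · injection e2 with f1 f2
        exact f1.symm
      · exact absurd (head_mem_heads h2') (by
          intro hmem
          exact hnd.1 (List.mem_cons_of_mem _ hmem))
    · rcases List.mem_cons.1 h2 with e2 | h2'
      · injection e2 with f1 f2; injection f2 with f2 f3
        subst f1; subst f2
        exact absurd (head_mem_heads h1') (by
          intro hmem
          exact hnd.1 (List.mem_cons_of_mem _ hmem))
      · exact ih h1' h2' hwl hnd.2

lemma path_count_pair {s t u v : V} {b b' : Bool} {l : List (Step V)}
    (hp : IsPath AS s t l) : l.count (u, v, b) + l.count (v, u, b') ≤ 1 := by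
  obtain ⟨hw, hnd⟩ := hp
  have hhd : (heads l).Nodup := (List.nodup_cons.1 hnd).2
  rcases eq_or_ne u v with rfl | hne
  · have h1 : (u, u, b) ∉ l := no_self_step ⟨hw, hnd⟩
    have h2 : (u, u, b') ∉ l := no_self_step ⟨hw, hnd⟩
    simp [List.count_eq_zero_of_not_mem h1, List.count_eq_zero_of_not_mem h2]
  · by_cases hm1 : (u, v, b) ∈ l
    · have : (v, u, b') ∉ l := fun hm2 => hne (path_no_rev ⟨hw, hnd⟩ hm1 hm2)
      have := List.count_eq_zero_of_not_mem this
      have hle : l.count (u, v, b) ≤ 1 :=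
        le_trans (count_le_heads u v b l) (List.nodup_iff_count_le_one.1 hhd v)
      omega
    · have := List.count_eq_zero_of_not_mem hm1
      have hle : l.count (v, u, b') ≤ 1 :=
        le_trans (count_le_heads v u b' l) (List.nodup_iff_count_le_one.1 hhd u)
      omega

lemma path_length_le {s t : V} {l : List (Step V)} (hp : IsPath AS s t l) :
    l.length ≤ Fintype.card V := by
  have h1 : (heads l).Nodup := (List.nodup_cons.1 hp.2).2
  have h2 : (heads l).length = l.length := List.length_map _
  exact h2 ▸ h1.length_le_card

lemma pathSet_finite (AS : V → V → Bool → Prop) (w : V → V → Bool → ℝ) (s t : V) :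
    {x : EReal | ∃ l, IsPath AS s t l ∧ (wSum w l : EReal) = x}.Finite := by
  have : {x : EReal | ∃ l, IsPath AS s t l ∧ (wSum w l : EReal) = x} ⊆
      (fun l : List (Step V) => ((wSum w l : ℝ) : EReal)) ''
        {l : List (Step V) | l.length ≤ Fintype.card V} := by
    rintro x ⟨l, hl, rfl⟩
    exact ⟨l, path_length_le hl, rfl⟩
  exact Set.Finite.subset (Set.Finite.image _ (List.finite_length_le (Step V) (Fintype.card V))) this

lemma distW_le {s t : V} {l : List (Step V)} (hp : IsPath AS s t l) :
    distW AS w s t ≤ (wSum w l : EReal) :=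
  sInf_le ⟨l, hp, rfl⟩

lemma distW_ne_bot (AS : V → V → Bool → Prop) (w : V → V → Bool → ℝ) (s t : V) :
    distW AS w s t ≠ ⊥ := by
  rcases Set.eq_empty_or_nonempty
      {x : EReal | ∃ l, IsPath AS s t l ∧ (wSum w l : EReal) = x} with he | hne
  · simp [distW, he]
  · have := hne.csInf_mem (pathSet_finite AS w s t)
    obtain ⟨l, hl, heq⟩ := this
    rw [distW, ← heq]
    exact EReal.coe_ne_bot _

lemma distW_attain {s t : V} (h : distW AS w s t ≠ ⊤) :
    ∃ l, IsPath AS s t l ∧ (wSum w l : EReal) = distW AS w s t := by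
  rcases Set.eq_empty_or_nonempty
      {x : EReal | ∃ l, IsPath AS s t l ∧ (wSum w l : EReal) = x} with he | hne
  · exact absurd (by simp [distW, he]) h
  · exact hne.csInf_mem (pathSet_finite AS w s t)

lemma distW_mono {AS AS' : V → V → Bool → Prop} (h : ∀ u v b, AS u v b → AS' u v b)
    (w : V → V → Bool → ℝ) (s t : V) : distW AS' w s t ≤ distW AS w s t := by
  apply le_sInf
  rintro x ⟨l, ⟨hw, hnd⟩, rfl⟩
  exact distW_le ⟨walk_mono h hw, hnd⟩

end WalkLib


section DLib

variable (D : WDigraph V)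

lemma special_symm {u v : V} (h : D.Special u v) : D.Special v u :=
  ⟨h.2.1, h.1, by linarith [h.2.2]⟩

lemma special_adjF (hloop : ∀ x, ¬ D.Adj x x) {u v : V} (h : D.Special u v) :
    D.F.Adj u v := ⟨fun he => hloop u (he ▸ h.1), h⟩

lemma cycles_nonneg {AS : V → V → Bool → Prop}
    (hsub : ∀ u v b, AS u v b → D.ImpArc u v b)
    (hnc : NearlyCons AS D.impW) {l : List (Step V)}
    (hss : ∀ u v, D.Special u v →
      l.count (u, v, false) + l.count (v, u, false) ≤ 1) :
    ∀ x c, IsCycle AS x c → (∀ a : Step V, c.count a ≤ l.count a) →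
      0 ≤ wSum D.impW c := by
  intro x c hc hcnt
  by_contra hneg
  push_neg at hneg
  have hlen := hnc x c hc hneg
  obtain ⟨a₁, a₂, rfl⟩ := List.length_eq_two.1 hlen
  obtain ⟨x₁, y₁, b₁⟩ := a₁
  obtain ⟨x₂, y₂, b₂⟩ := a₂
  obtain ⟨hw, hnemp, hnd⟩ := hc
  obtain ⟨he1, hA1, hw2⟩ := hw
  obtain ⟨he2, hA2, hw3⟩ := hw2
  have he3 : y₂ = x₁ := (hw3 : y₂ = x).trans he1.symm
  simp only [he2, he3] at hA2 hneg hnd hcnt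
  have hvx : y₁ ≠ x₁ := by
    simp [heads, List.nodup_cons] at hnd
    exact hnd
  have h1 := hsub _ _ _ hA1
  have h2 := hsub _ _ _ hA2
  have hwsum : wSum D.impW [(x₁, y₁, b₁), (y₁, x₁, b₂)] =
      D.impW x₁ y₁ b₁ + D.impW y₁ x₁ b₂ := by simp
  rw [hwsum] at hneg
  cases b₁ <;> cases b₂ <;>
    simp only [WDigraph.ImpArc, if_true, if_false, Bool.false_eq_true,
      WDigraph.impW] at h1 h2 hneg
  · -- both original arcs: a negative special digon, contradicts hss
    have hsp : D.Special x₁ y₁ := ⟨h1, h2, hneg⟩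
    have hk := hss x₁ y₁ hsp
    have hc1 := hcnt (x₁, y₁, false)
    have hc2 := hcnt (y₁, x₁, false)
    have e1 : 0 < List.count ((x₁, y₁, false) : Step V)
        [(x₁, y₁, false), (y₁, x₁, false)] := by
      apply List.count_pos_iff.2; simp
    have e2 : 0 < List.count ((y₁, x₁, false) : Step V)
        [(x₁, y₁, false), (y₁, x₁, false)] := by
      apply List.count_pos_iff.2; simp
    omega
  · linarith
  · linarith
  · have := h1.2.2
    linarith

lemma walk_le_distW {AS : V → V → Bool → Prop}
    (hsub : ∀ u v b, AS u v b → D.ImpArc u v b)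
    (hnc : NearlyCons AS D.impW) {s t : V} {l : List (Step V)}
    (hw : IsWalk AS s t l)
    (hss : ∀ u v, D.Special u v →
      l.count (u, v, false) + l.count (v, u, false) ≤ 1) :
    distW AS D.impW s t ≤ (wSum D.impW l : EReal) := by
  obtain ⟨p, hp, hle⟩ := extract_path hw (cycles_nonneg D hsub hnc hss)
  exact le_trans (distW_le hp) (by exact_mod_cast hle)

/-- The reverse of a walk in `F`, traversed using loose arcs. -/
def looseRev {u v : V} (p : D.F.Walk u v) : List (Step V) :=
  (p.darts.map fun d => (d.toProd.2, d.toProd.1, true)).reverse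

lemma fWeight_nil {u : V} : D.fWeight (SimpleGraph.Walk.nil : D.F.Walk u u) = 0 := by
  simp [WDigraph.fWeight]

lemma fWeight_cons {u w v : V} (h : D.F.Adj u w) (q : D.F.Walk w v) :
    D.fWeight (SimpleGraph.Walk.cons h q) = D.c u w + D.fWeight q := by
  simp [WDigraph.fWeight]

lemma looseRev_spec {AS : V → V → Bool → Prop}
    (hAS : ∀ x y, D.Special x y → AS y x true) :
    ∀ {u v : V} (p : D.F.Walk u v), IsWalk AS v u (looseRev D p) ∧
      wSum D.impW (looseRev D p) = - D.fWeight p ∧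
      (∀ x y : V, (x, y, false) ∉ looseRev D p) := by
  intro u v p
  induction p with
  | nil => exact ⟨rfl, by simp [looseRev, fWeight_nil], by simp [looseRev]⟩
  | @cons u w v h q ih =>
    have hrw : looseRev D (SimpleGraph.Walk.cons h q) =
        looseRev D q ++ [(w, u, true)] := by
      simp [looseRev, SimpleGraph.Walk.darts_cons]
    refine ⟨?_, ?_, ?_⟩
    · rw [hrw]
      refine walk_append ih.1 ⟨rfl, hAS u w h.2, rfl⟩
    · rw [hrw, wSum_append, ih.2.1, fWeight_cons]
      simp [WDigraph.impW]
    · intro x y hm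
      rw [hrw] at hm
      rcases List.mem_append.1 hm with hm | hm
      · exact ih.2.2 x y hm
      · simp at hm

/-- The steps of a walk in `F`, traversed using the special arcs. -/
def tpList {u v : V} (p : D.F.Walk u v) : List (Step V) :=
  p.darts.map fun d => (d.toProd.1, d.toProd.2, false)

lemma tpList_walk {AS : V → V → Bool → Prop} (R : V → Prop)
    (hAS : ∀ x y, D.F.Adj x y → R x → AS x y false)
    (hcl : ∀ x y, D.F.Adj x y → R x → R y) :
    ∀ {u v : V} (p : D.F.Walk u v), R u → IsWalk AS u v (tpList D p) := by
  intro u v p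
  induction p with
  | nil => intro _; exact rfl
  | @cons u w v h q ih =>
    intro hu
    exact ⟨rfl, hAS u w h hu, ih (hcl u w h hu)⟩

lemma tpList_wSum {u v : V} (p : D.F.Walk u v) :
    wSum D.impW (tpList D p) = D.fWeight p := by
  induction p with
  | nil => simp [tpList, fWeight_nil]
  | @cons u w v h q ih =>
    simp only [tpList, SimpleGraph.Walk.darts_cons, List.map_cons, wSum_cons,
      fWeight_cons]
    rw [← tpList]
    rw [ih]
    simp [WDigraph.impW]

lemma tpList_heads {u v : V} (p : D.F.Walk u v) :
    u :: heads (tpList D p) = p.support := by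
  have h1 : heads (tpList D p) = p.darts.map (fun d => d.snd) := by
    simp [tpList, heads, List.map_map]
  rw [h1]
  exact p.cons_map_snd_darts

lemma tpList_mem {u v : V} (p : D.F.Walk u v) {a b : V} {c' : Bool}
    (h : (a, b, c') ∈ tpList D p) :
    D.F.Adj a b ∧ a ∈ p.support ∧ c' = false := by
  obtain ⟨d, hd, he⟩ := List.mem_map.1 h
  injection he with e1 e2
  injection e2 with e2 e3
  subst e1; subst e2; subst e3
  exact ⟨d.adj, SimpleGraph.Walk.dart_fst_mem_support_of_mem_darts p hd, rfl⟩

lemma support_reachable {u v : V} (p : D.F.Walk u v) {x : V} (h : x ∈ p.support) :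
    D.F.Reachable u x := ⟨p.takeUntil x h⟩

end DLib


section RemLib

variable (D : WDigraph V) {k : ℕ} (t₀ : Fin k → V)

lemma walk_mono_mem {AS AS' : V → V → Bool → Prop} {s t : V} {l : List (Step V)}
    (hw : IsWalk AS s t l)
    (h : ∀ a ∈ l, AS a.1 a.2.1 a.2.2 → AS' a.1 a.2.1 a.2.2) : IsWalk AS' s t l := by
  induction l generalizing s with
  | nil => exact hw
  | cons a p ih =>
    obtain ⟨x, y, c⟩ := a
    obtain ⟨rfl, h1, h2⟩ := hw
    exact ⟨rfl, h (x, y, c) List.mem_cons_self h1,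
      ih h2 (fun a ha => h a (List.mem_cons_of_mem _ ha))⟩

lemma arcsJ_mono {J J' : Finset (Fin k)} (h : J ⊆ J') :
    ∀ u v b, D.arcsMinus (remJ D t₀ J) u v b → D.arcsMinus (remJ D t₀ J') u v b := by
  rintro u v b ⟨hi, hn⟩
  refine ⟨hi, ?_⟩
  rintro ⟨hb, hadj, j, hj, hr⟩
  exact hn ⟨hb, hadj, j, fun hjJ => hj (h hjJ), hr⟩

lemma no_special_in_empty (hloop : ∀ x, ¬ D.Adj x x)
    (hall : ∀ x y, D.F.Adj x y → ∃ i, D.F.Reachable (t₀ i) x) {u v : V}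
    (h : D.arcsMinus (remJ D t₀ (∅ : Finset (Fin k))) u v false) : ¬ D.Special u v := by
  intro hsp
  have hadj : D.F.Adj u v := special_adjF D hloop hsp
  obtain ⟨i, hri⟩ := hall u v hadj
  exact h.2 ⟨rfl, hadj, i, Finset.notMem_empty i, hri⟩

end RemLib

/-- Let `T_1, …, T_k` be the negative trees of the forest `F`, let
`J ⊆ {1,…,k}`, let `D_J = D − ⋃_{i ∉ J} A(T_i)` with distance function `d_J`.  If `c` is
nearly conservative on `D_{J∖{i}}` for every `i ∈ J` and on `D_J`, then for all `s, t`: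
`d_J(s,t) = min( d_∅(s,t), min_{i ∈ J} min_{u,v ∈ V(T_i)}
  [ d_∅(s,u) + d^{T_i}(u,v) + d_{J∖{i}}(v,t) ] )`. -/
theorem statement_9 {V : Type} [Fintype V] [DecidableEq V] (D : WDigraph V)
    (hloop : ∀ v, ¬ D.Adj v v) (hforest : D.F.IsAcyclic)
    (k : ℕ) (t₀ : Fin k → V)
    (hne : ∀ i, ∃ y, D.F.Adj (t₀ i) y)
    (hdisj : ∀ i j, i ≠ j → ¬ D.F.Reachable (t₀ i) (t₀ j))
    (hall : ∀ x y, D.F.Adj x y → ∃ i, D.F.Reachable (t₀ i) x)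
    (dT : Fin k → V → V → ℝ)
    (hdT : ∀ i u v, D.F.Reachable (t₀ i) u → D.F.Reachable (t₀ i) v →
      ∃ p : D.F.Walk u v, p.IsPath ∧ D.fWeight p = dT i u v)
    (J : Finset (Fin k))
    (hncJi : ∀ i ∈ J, NearlyCons (D.arcsMinus (remJ D t₀ (J.erase i))) D.impW)
    (hncJ : NearlyCons (D.arcsMinus (remJ D t₀ J)) D.impW)
    (s t : V) :
    distW (D.arcsMinus (remJ D t₀ J)) D.impW s t =
      min (distW (D.arcsMinus (remJ D t₀ (∅ : Finset (Fin k)))) D.impW s t)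
        (sInf {x : EReal | ∃ i ∈ J, ∃ u v,
          D.F.Reachable (t₀ i) u ∧ D.F.Reachable (t₀ i) v ∧
          x = distW (D.arcsMinus (remJ D t₀ (∅ : Finset (Fin k)))) D.impW s u
              + (dT i u v : EReal)
              + distW (D.arcsMinus (remJ D t₀ (J.erase i))) D.impW v t}) := by
  classical
  refine le_antisymm (le_min ?_ ?_) ?_
  · exact distW_mono (arcsJ_mono D t₀ (Finset.empty_subset J)) D.impW s t
  · apply le_sInf
    rintro x ⟨i, hiJ, u, v, hru, hrv, rfl⟩
    by_cases ha : distW (D.arcsMinus (remJ D t₀ (∅ : Finset (Fin k)))) D.impW s u = ⊤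
    · rw [ha, EReal.top_add_of_ne_bot (EReal.coe_ne_bot _),
        EReal.top_add_of_ne_bot (distW_ne_bot _ _ _ _)]
      exact le_top
    by_cases hc : distW (D.arcsMinus (remJ D t₀ (J.erase i))) D.impW v t = ⊤
    · rw [hc, EReal.add_top_of_ne_bot (fun hbot => by
        rcases EReal.add_eq_bot_iff.1 hbot with h | h
        exacts [distW_ne_bot _ _ _ _ h, EReal.coe_ne_bot _ h])]
      exact le_top
    obtain ⟨p1, hp1, he1⟩ := distW_attain ha
    obtain ⟨p3, hp3, he3⟩ := distW_attain hc
    obtain ⟨q, hq, hqw⟩ := hdT i u v hru hrv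
    have hTW : IsWalk (D.arcsMinus (remJ D t₀ J)) u v (tpList D q) := by
      refine tpList_walk D (D.F.Reachable (t₀ i)) ?_ ?_ q hru
      · intro x y hadj hrx
        refine ⟨?_, ?_⟩
        · show D.ImpArc x y false
          simp only [WDigraph.ImpArc, Bool.false_eq_true, if_false]
          exact hadj.2.1
        · rintro ⟨-, -, j, hj, hrj⟩
          rcases eq_or_ne j i with rfl | hne'
          · exact hj hiJ
          · exact hdisj j i hne' (hrj.trans hrx.symm)
      · intro x y hadj hrx
        exact hrx.trans hadj.reachable
    have hw1 : IsWalk (D.arcsMinus (remJ D t₀ J)) s u p1 :=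
      walk_mono (arcsJ_mono D t₀ (Finset.empty_subset J)) hp1.1
    have hw3 : IsWalk (D.arcsMinus (remJ D t₀ J)) v t p3 :=
      walk_mono (arcsJ_mono D t₀ (Finset.erase_subset i J)) hp3.1
    have hwalkL : IsWalk (D.arcsMinus (remJ D t₀ J)) s t (p1 ++ tpList D q ++ p3) :=
      walk_append (walk_append hw1 hTW) hw3
    have htp_path : IsPath (D.arcsMinus (remJ D t₀ J)) u v (tpList D q) :=
      ⟨hTW, by rw [tpList_heads]; exact hq.support_nodup⟩
    have hss : ∀ a b, D.Special a b →
        (p1 ++ tpList D q ++ p3).count (a, b, false) +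
          (p1 ++ tpList D q ++ p3).count (b, a, false) ≤ 1 := by
      intro a b hsp
      have hp1a : ((a, b, false) : Step V) ∉ p1 := fun hm =>
        no_special_in_empty D t₀ hloop hall (walk_arc_mem hp1.1 hm) hsp
      have hp1b : ((b, a, false) : Step V) ∉ p1 := fun hm =>
        no_special_in_empty D t₀ hloop hall (walk_arc_mem hp1.1 hm) (special_symm D hsp)
      simp only [List.count_append, List.count_eq_zero_of_not_mem hp1a,
        List.count_eq_zero_of_not_mem hp1b]
      by_cases hra : D.F.Reachable (t₀ i) a
      · have hrb : D.F.Reachable (t₀ i) b :=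
          hra.trans (special_adjF D hloop hsp).reachable
        have hp3a : ((a, b, false) : Step V) ∉ p3 := fun hm =>
          (walk_arc_mem hp3.1 hm).2
            ⟨rfl, special_adjF D hloop hsp, i, Finset.notMem_erase i J, hra⟩
        have hp3b : ((b, a, false) : Step V) ∉ p3 := fun hm =>
          (walk_arc_mem hp3.1 hm).2
            ⟨rfl, special_adjF D hloop (special_symm D hsp), i,
              Finset.notMem_erase i J, hrb⟩
        have hpair := path_count_pair (u := a) (v := b) (b := false) (b' := false) htp_path
        simp only [List.count_eq_zero_of_not_mem hp3a, List.count_eq_zero_of_not_mem hp3b]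
        omega
      · have htpa : ((a, b, false) : Step V) ∉ tpList D q := by
          intro hm
          obtain ⟨hadj', hmem, -⟩ := tpList_mem D q hm
          exact hra (hru.trans (support_reachable D q hmem))
        have htpb : ((b, a, false) : Step V) ∉ tpList D q := by
          intro hm
          obtain ⟨hadj', hmem, -⟩ := tpList_mem D q hm
          exact hra ((hru.trans (support_reachable D q hmem)).trans hadj'.reachable)
        have hpair := path_count_pair (u := a) (v := b) (b := false) (b' := false) hp3
        simp only [List.count_eq_zero_of_not_mem htpa, List.count_eq_zero_of_not_mem htpb]
        omega
    have hle := walk_le_distW D (fun _ _ _ h => h.1) hncJ hwalkL hss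
    have hsum : wSum D.impW (p1 ++ tpList D q ++ p3) =
        wSum D.impW p1 + dT i u v + wSum D.impW p3 := by
      rw [wSum_append, wSum_append, tpList_wSum, hqw]
    rw [← he1, ← he3]
    calc distW (D.arcsMinus (remJ D t₀ J)) D.impW s t
        ≤ ((wSum D.impW (p1 ++ tpList D q ++ p3) : ℝ) : EReal) := hle
      _ = ((wSum D.impW p1 + dT i u v + wSum D.impW p3 : ℝ) : EReal) := by rw [hsum]
      _ = ((wSum D.impW p1 : ℝ) : EReal) + ((dT i u v : ℝ) : EReal)
            + ((wSum D.impW p3 : ℝ) : EReal) := by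
          rw [EReal.coe_add, EReal.coe_add]
  · -- lower bound: the minimum is at most `d_J(s,t)`
    by_cases hT : distW (D.arcsMinus (remJ D t₀ J)) D.impW s t = ⊤
    · rw [hT]; exact le_top
    obtain ⟨P, hP, heP⟩ := distW_attain hT
    rcases split_first (fun a : Step V => a.2.2 = false ∧ D.Special a.1 a.2.1) hP.1
      with hnone | ⟨u, x, b, P1, Q, hPeq, hP1none, hpstep, hwP1, hstep, hwQ⟩
    · -- Case 1: no special arcs, so `P` is a path of `D_∅`
      have hw0 : IsWalk (D.arcsMinus (remJ D t₀ (∅ : Finset (Fin k)))) s t P := by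
        refine walk_mono_mem hP.1 ?_
        rintro ⟨a1, a2, ab⟩ hm ⟨himp, hn⟩
        refine ⟨himp, ?_⟩
        rintro ⟨hb', hadj', -⟩
        exact (hnone _ hm) ⟨hb', hadj'.2⟩
      refine le_trans (min_le_left _ _) ?_
      rw [← heP]
      exact distW_le ⟨hw0, hP.2⟩
    · -- Case 2: `P` contains a special arc
      have hb0 : b = false := hpstep.1
      subst hb0
      have hsp : D.Special u x := hpstep.2
      subst hPeq
      have hadjux : D.F.Adj u x := special_adjF D hloop hsp
      obtain ⟨i, hri⟩ := hall u x hadjux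
      have hiJ : i ∈ J := by
        by_contra hiJ
        exact hstep.2 ⟨rfl, hadjux, i, hiJ, hri⟩
      have hwR : IsWalk (D.arcsMinus (remJ D t₀ J)) u t ((u, x, false) :: Q) :=
        ⟨rfl, hstep, hwQ⟩
      obtain ⟨v, M, P3, hReq, hwM, hwP3, hvp, hnop⟩ :=
        split_last (D.F.Reachable (t₀ i)) hwR
      have hrv : D.F.Reachable (t₀ i) v := by
        rcases hvp with h | ⟨-, rfl⟩
        exacts [h, hri]
      have hMne : M ≠ [] := by
        rintro rfl
        simp only [List.nil_append] at hReq
        have hx : x ∈ heads P3 := by rw [← hReq]; simp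
        exact hnop x hx (hri.trans hadjux.reachable)
      -- nodup facts
      have hnd := hP.2
      rw [heads_append, hReq, heads_append] at hnd
      have hndP1 : (s :: heads P1).Nodup := by
        refine List.Nodup.sublist ?_ hnd
        exact List.Sublist.cons₂ s (List.sublist_append_left _ _)
      have hndMP3 : (heads M ++ heads P3).Nodup := by
        refine List.Nodup.sublist ?_ hnd
        refine List.Sublist.trans (List.sublist_append_right _ _) (List.sublist_cons_self _ _)
      have hvMem : v ∈ heads M := walk_end_mem_heads hwM hMne
      have hvnotP3 : v ∉ heads P3 :=
        fun hm => (List.disjoint_of_nodup_append hndMP3) hvMem hm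
      have hndP3 : (v :: heads P3).Nodup :=
        List.nodup_cons.2 ⟨hvnotP3, hndMP3.of_append_right⟩
      -- P1 is a path of D_∅
      have hwP1' : IsWalk (D.arcsMinus (remJ D t₀ (∅ : Finset (Fin k)))) s u P1 := by
        refine walk_mono_mem hwP1 ?_
        rintro ⟨a1, a2, ab⟩ hm ⟨himp, hn⟩
        refine ⟨himp, ?_⟩
        rintro ⟨hb', hadj', -⟩
        exact (hP1none _ hm) ⟨hb', hadj'.2⟩
      -- P3 is a path of D_{J \ i}
      have hwP3' : IsWalk (D.arcsMinus (remJ D t₀ (J.erase i))) v t P3 := by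
        refine walk_mono_mem hwP3 ?_
        rintro ⟨a1, a2, ab⟩ hm ⟨himp, hn⟩
        refine ⟨himp, ?_⟩
        rintro ⟨hb', hadj', j, hj, hrj⟩
        by_cases hjJ : j ∈ J
        · have hji : j = i := by
            by_contra hne'
            exact hj (Finset.mem_erase.2 ⟨hne', hjJ⟩)
          subst hji
          exact hnop a2 (head_mem_heads hm) (hrj.trans hadj'.reachable)
        · exact hn ⟨hb', hadj', j, hjJ, hrj⟩
      -- the middle part costs at least the tree distance
      obtain ⟨qM, hqM, hqMw⟩ := hdT i u v hri hrv
      have hAS : ∀ x' y', D.Special x' y' →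
          D.arcsMinus (remJ D t₀ J) y' x' true := by
        intro x' y' hsp'
        refine ⟨?_, ?_⟩
        · show D.ImpArc y' x' true
          simp only [WDigraph.ImpArc, if_true]
          exact hsp'
        · rintro ⟨hb', -⟩
          simp at hb'
      have hlrev := looseRev_spec D hAS qM
      have hwC : IsWalk (D.arcsMinus (remJ D t₀ J)) u u (M ++ looseRev D qM) :=
        walk_append hwM hlrev.1
      have hssC : ∀ a b', D.Special a b' →
          (M ++ looseRev D qM).count (a, b', false) +
            (M ++ looseRev D qM).count (b', a, false) ≤ 1 := by
        intro a b' hsp'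
        have hcP := path_count_pair (u := a) (v := b') (b := false) (b' := false) hP
        have hrw : P1 ++ (u, x, false) :: Q = P1 ++ (M ++ P3) := by rw [hReq]
        rw [hrw] at hcP
        simp only [List.count_append,
          List.count_eq_zero_of_not_mem (hlrev.2.2 a b'),
          List.count_eq_zero_of_not_mem (hlrev.2.2 b' a)] at hcP ⊢
        omega
      have hCyc := cycles_nonneg D (fun _ _ _ h => h.1) hncJ hssC
      have h0 : 0 ≤ wSum D.impW (M ++ looseRev D qM) :=
        closed_nonneg hCyc (M ++ looseRev D qM).length _ u le_rfl hwC (fun a => le_rfl)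
      have hMw : dT i u v ≤ wSum D.impW M := by
        rw [wSum_append, hlrev.2.1, hqMw] at h0
        linarith
      -- assemble
      have hx0 : distW (D.arcsMinus (remJ D t₀ (∅ : Finset (Fin k)))) D.impW s u
            + (dT i u v : EReal)
            + distW (D.arcsMinus (remJ D t₀ (J.erase i))) D.impW v t ∈
          {x : EReal | ∃ i ∈ J, ∃ u v,
            D.F.Reachable (t₀ i) u ∧ D.F.Reachable (t₀ i) v ∧
            x = distW (D.arcsMinus (remJ D t₀ (∅ : Finset (Fin k)))) D.impW s u
                + (dT i u v : EReal)
                + distW (D.arcsMinus (remJ D t₀ (J.erase i))) D.impW v t} :=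
        ⟨i, hiJ, u, v, hri, hrv, rfl⟩
      refine le_trans (min_le_right _ _) (le_trans (sInf_le hx0) ?_)
      rw [← heP]
      have e1 : distW (D.arcsMinus (remJ D t₀ (∅ : Finset (Fin k)))) D.impW s u ≤
          ((wSum D.impW P1 : ℝ) : EReal) := distW_le ⟨hwP1', hndP1⟩
      have e3 : distW (D.arcsMinus (remJ D t₀ (J.erase i))) D.impW v t ≤
          ((wSum D.impW P3 : ℝ) : EReal) := distW_le ⟨hwP3', hndP3⟩
      have esum : wSum D.impW (P1 ++ (u, x, false) :: Q) =
          wSum D.impW P1 + (wSum D.impW M + wSum D.impW P3) := by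
        rw [hReq, wSum_append, wSum_append]
      calc distW (D.arcsMinus (remJ D t₀ (∅ : Finset (Fin k)))) D.impW s u
            + (dT i u v : EReal)
            + distW (D.arcsMinus (remJ D t₀ (J.erase i))) D.impW v t
          ≤ ((wSum D.impW P1 : ℝ) : EReal) + ((wSum D.impW M : ℝ) : EReal)
              + ((wSum D.impW P3 : ℝ) : EReal) :=
            add_le_add (add_le_add e1 (EReal.coe_le_coe_iff.2 hMw)) e3
        _ = ((wSum D.impW (P1 ++ (u, x, false) :: Q) : ℝ) : EReal) := by
            rw [esum, EReal.coe_add, EReal.coe_add, add_assoc]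

end NearlyConservativePaper
end

section
/- Let D=(V,A) be a digraph with weight function c, and let D⁺ be the improved digraph obtained from D by adding, for each special arc uv, a loose ordinary arc from v to u of weight −c(uv). Then each added loose arc is strictly longer than an existing parallel arc (namely −c(uv) > c(vu)); consequently c is nearly conservative on D if and only if c is nearly conservative on D⁺, and for every ordered pair s ≠ t the minimum weight of a directed st-path in D equals the minimum weight of a directed st-path in D⁺. -/
namespace NearlyConservativePaper

variable {V : Type} [Fintype V] [DecidableEq V]

/-- Replace every added loose arc by the parallel original arc. -/
def flat (l : List (Step V)) : List (Step V) :=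
  l.map fun a => (a.1, a.2.1, false)

lemma heads_flat (l : List (Step V)) : heads (flat l) = heads l := by
  simp [heads, flat]

lemma length_flat (l : List (Step V)) : (flat l).length = l.length := by
  simp [flat]

lemma walk_flat (D : WDigraph V) : ∀ s t (l : List (Step V)),
    IsWalk D.ImpArc s t l → IsWalk D.baseArcs s t (flat l) := by
  intro s t l
  induction l generalizing s with
  | nil => exact fun h => h
  | cons a l ih =>
    obtain ⟨u, v, b⟩ := a
    rintro ⟨rfl, harc, hrest⟩
    refine ⟨rfl, ⟨rfl, ?_⟩, ih v hrest⟩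
    cases b with
    | false => simpa [WDigraph.ImpArc] using harc
    | true => exact (by simpa [WDigraph.ImpArc] using harc : D.Special v u).2.1

lemma wsum_flat (D : WDigraph V) : ∀ s t (l : List (Step V)),
    IsWalk D.ImpArc s t l → wSum D.impW (flat l) ≤ wSum D.impW l := by
  intro s t l
  induction l generalizing s with
  | nil => exact fun _ => le_refl _
  | cons a l ih =>
    obtain ⟨u, v, b⟩ := a
    rintro ⟨rfl, harc, hrest⟩
    have h2 := ih v hrest
    simp only [flat, List.map_cons, wSum, List.sum_cons] at *
    cases b with
    | false => exact add_le_add le_rfl h2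
    | true =>
      have hs : D.Special v u := by simpa [WDigraph.ImpArc] using harc
      have h1 : D.impW u v false ≤ D.impW u v true := by
        have := hs.2.2
        simp only [WDigraph.impW, Bool.false_eq_true, if_true, if_false]
        linarith
      exact add_le_add h1 h2

lemma walk_base_imp (D : WDigraph V) : ∀ s t (l : List (Step V)),
    IsWalk D.baseArcs s t l → IsWalk D.ImpArc s t l := by
  intro s t l
  induction l generalizing s with
  | nil => exact fun h => h
  | cons a l ih =>
    obtain ⟨u, v, b⟩ := a
    rintro ⟨rfl, ⟨rfl, hadj⟩, hrest⟩
    exact ⟨rfl, by simpa [WDigraph.ImpArc] using hadj, ih v hrest⟩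

/-- In the improved digraph `D⁺`, each added loose arc is strictly longer
than an existing parallel arc (for the special arc `uv`, the loose arc from `v` to `u` has
weight `−c(uv) > c(vu)`); consequently `c` is nearly conservative on `D` if and only if it
is nearly conservative on `D⁺`, and for every ordered pair `s ≠ t` the minimum weight of a
directed `st`-path in `D` equals the minimum weight of a directed `st`-path in `D⁺`. -/
theorem statement_18 {V : Type} [Fintype V] [DecidableEq V] (D : WDigraph V)
    (hloop : ∀ v, ¬ D.Adj v v) :
    (∀ u v, D.Special u v → D.c v u < -(D.c u v)) ∧
    (NearlyCons D.baseArcs D.impW ↔ NearlyCons D.ImpArc D.impW) ∧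
    (∀ s t : V, s ≠ t →
      distW D.baseArcs D.impW s t = distW D.ImpArc D.impW s t) := by
  refine ⟨fun u v hs => by have := hs.2.2; linarith, ?_, ?_⟩
  · constructor
    · intro h s l ⟨hw, hne, hnd⟩ hneg
      have hw' := walk_flat D s s l hw
      have hcyc : IsCycle D.baseArcs s (flat l) :=
        ⟨hw', by simp [flat, hne], by rw [heads_flat]; exact hnd⟩
      have hneg' : wSum D.impW (flat l) < 0 :=
        lt_of_le_of_lt (wsum_flat D s s l hw) hneg
      have := h s (flat l) hcyc hneg'
      rwa [length_flat] at this
    · intro h s l ⟨hw, hne, hnd⟩ hneg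
      exact h s l ⟨walk_base_imp D s s l hw, hne, hnd⟩ hneg
  · intro s t _
    apply le_antisymm
    · refine le_sInf fun x hx => ?_
      obtain ⟨l, ⟨hw, hnd⟩, rfl⟩ := hx
      have hmem : (↑(wSum D.impW (flat l)) : EReal) ∈
          {x : EReal | ∃ l, IsPath D.baseArcs s t l ∧ (wSum D.impW l : EReal) = x} :=
        ⟨flat l, ⟨walk_flat D s t l hw, by rw [heads_flat]; exact hnd⟩, rfl⟩
      exact le_trans (sInf_le hmem)
        (EReal.coe_le_coe_iff.mpr (wsum_flat D s t l hw))
    · refine le_sInf fun x hx => ?_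
      obtain ⟨l, ⟨hw, hnd⟩, rfl⟩ := hx
      exact sInf_le ⟨l, ⟨walk_base_imp D s t l hw, hnd⟩, rfl⟩

end NearlyConservativePaper
end
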